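/- For all reals x, y > 0 with x ≠ y and every real p with 0 < p < 1, the two-variable Wigner–Yanase–Dyson function satisfies W_p(x,y) ≤ K(x/y)^{p(1-p)} · L(x,y), where K is the Kantorovich constant. -/

import Mathlib

/-!
In the coordinates `x = exp (m + u)`, `y = exp (m - u)` the factor `exp m` cancels and,
since `x / y = exp (2u)` has Kantorovich constant `cosh² u`, the inequality becomes
`p (1 - p) u sinh u ≤ cosh u ^ (2p(1-p)) sinh (p u) sinh ((1 - p) u)` for `u > 0`.
With `a t = log (sinh t / t)`, the function `a t / t²` is decreasing, so `p² a u ≤ a (p u)`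
for `0 < p ≤ 1`. Adding this for `p` and `1 - p` and using `p² + (1 - p)² = 1 - 2p(1-p)`
leaves `a u ≤ log (cosh u)`, i.e. `tanh u ≤ u`.
-/

open Real Set Filter Topology

theorem nonneg_of_tendsto_nhdsGT_of_hasDerivAt_nonneg {f f' : ℝ → ℝ}
    (hlim : Tendsto f (𝓝[>] 0) (𝓝 0)) (hf : ∀ t, 0 < t → HasDerivAt f (f' t) t)
    (hf' : ∀ t, 0 < t → 0 ≤ f' t) {t : ℝ} (ht : 0 < t) : 0 ≤ f t := by
  have hmono : MonotoneOn f (Ioi 0) :=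
    monotoneOn_of_hasDerivWithinAt_nonneg (convex_Ioi 0)
      (fun s hs => (hf s hs).continuousAt.continuousWithinAt)
      (fun s hs => (hf s (interior_subset hs)).hasDerivWithinAt)
      (fun s hs => hf' s (interior_subset hs))
  refine le_of_tendsto hlim ?_
  filter_upwards [Ioo_mem_nhdsGT ht] with s hs
  exact hmono hs.1 ht hs.2.le

theorem sinh_le_mul_cosh {t : ℝ} (ht : 0 ≤ t) : sinh t ≤ t * cosh t := by
  rcases ht.eq_or_lt with rfl | ht
  · simp
  have hlim : Tendsto (fun t => t * cosh t - sinh t) (𝓝[>] 0) (𝓝 0) :=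
    ((show Continuous fun t => t * cosh t - sinh t by fun_prop).tendsto' 0 0
      (by simp)).mono_left nhdsWithin_le_nhds
  have := nonneg_of_tendsto_nhdsGT_of_hasDerivAt_nonneg hlim
    (fun t _ => by
      refine (((hasDerivAt_id' t).mul (hasDerivAt_cosh t)).sub (hasDerivAt_sinh t)).congr_deriv ?_
      ring)
    (fun t ht => mul_nonneg ht.le (sinh_nonneg_iff.2 ht.le)) ht
  linarith

theorem two_sinh_sq_le {t : ℝ} (ht : 0 ≤ t) :
    2 * sinh t ^ 2 ≤ t * sinh t * cosh t + t ^ 2 := by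
  rcases ht.eq_or_lt with rfl | ht
  · simp
  have hderiv_nonneg : ∀ s, 0 < s →
      0 ≤ s * (cosh s ^ 2 + sinh s ^ 2) + 2 * s - 3 * sinh s * cosh s := by
    refine fun s hs => nonneg_of_tendsto_nhdsGT_of_hasDerivAt_nonneg
      (f' := fun s => 2 + 4 * s * sinh s * cosh s - 2 * (cosh s ^ 2 + sinh s ^ 2))
      (((by fun_prop : Continuous fun s => s * (cosh s ^ 2 + sinh s ^ 2) + 2 * s
        - 3 * sinh s * cosh s).tendsto' 0 0 (by simp)).mono_left nhdsWithin_le_nhds)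
      (fun s _ => ?_) (fun s hs => ?_) hs
    · refine ((((hasDerivAt_id' s).mul (((hasDerivAt_cosh s).pow 2).add
        ((hasDerivAt_sinh s).pow 2))).add ((hasDerivAt_id' s).const_mul 2)).sub
        (((hasDerivAt_sinh s).const_mul 3).mul (hasDerivAt_cosh s))).congr_deriv ?_
      simp only [Pi.add_apply, Pi.pow_apply]; push_cast; ring
    · have := sinh_le_mul_cosh hs.le
      have := sinh_nonneg_iff.2 hs.le
      nlinarith [cosh_sq s]
  have := nonneg_of_tendsto_nhdsGT_of_hasDerivAt_nonneg
    (f' := fun s => s * (cosh s ^ 2 + sinh s ^ 2) + 2 * s - 3 * sinh s * cosh s)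
    (((by fun_prop : Continuous fun s => s * sinh s * cosh s + s ^ 2
      - 2 * sinh s ^ 2).tendsto' 0 0 (by simp)).mono_left nhdsWithin_le_nhds)
    (fun s _ => (((((hasDerivAt_id' s).mul (hasDerivAt_sinh s)).mul (hasDerivAt_cosh s)).add
      (hasDerivAt_pow 2 s)).sub (((hasDerivAt_sinh s).pow 2).const_mul 2)).congr_deriv
      (by simp only [Pi.mul_apply]; push_cast; ring)) hderiv_nonneg ht
  linarith

theorem tendsto_sinh_div_self_nhdsNE_zero : Tendsto (fun t => sinh t / t) (𝓝[≠] 0) (𝓝 1) := by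
  simpa [div_eq_inv_mul] using (hasDerivAt_sinh 0).tendsto_slope_zero

theorem hasDerivAt_log_sinh_div_self {t : ℝ} (ht : t ≠ 0) :
    HasDerivAt (fun t => log (sinh t / t)) (cosh t / sinh t - 1 / t) t := by
  have hs : sinh t ≠ 0 := sinh_ne_zero.2 ht
  refine (((hasDerivAt_sinh t).div (hasDerivAt_id' t) ht).log
    (div_ne_zero hs ht)).congr_deriv ?_
  simp only [Pi.div_apply]
  field_simp

theorem mul_coth_sub_one_le_two_log_sinh_div_self {t : ℝ} (ht : 0 < t) :
    t * cosh t / sinh t - 1 ≤ 2 * log (sinh t / t) := by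
  have hlim : Tendsto (fun t => 2 * log (sinh t / t) - (t * cosh t / sinh t - 1))
      (𝓝[>] 0) (𝓝 0) := by
    have hS := tendsto_sinh_div_self_nhdsNE_zero.mono_left (nhdsGT_le_nhdsNE 0)
    have hlog := ((continuousAt_log one_ne_zero).tendsto.comp hS).const_mul 2
    have hcoth := ((continuous_cosh.tendsto' 0 1 cosh_zero).mono_left
      nhdsWithin_le_nhds).div hS one_ne_zero
    convert hlog.sub (hcoth.sub_const 1) using 2 with s
    · simp [div_div_eq_mul_div, mul_comm]
    · simp
  refine sub_nonneg.1 (nonneg_of_tendsto_nhdsGT_of_hasDerivAt_nonneg hlim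
    (f' := fun s => (s * sinh s * cosh s + s ^ 2 - 2 * sinh s ^ 2) / (s * sinh s ^ 2))
    (fun s hs => ?_) (fun s hs => ?_) ht)
  · have hsinh : sinh s ≠ 0 := sinh_ne_zero.2 hs.ne'
    refine (((hasDerivAt_log_sinh_div_self hs.ne').const_mul 2).sub
      ((((hasDerivAt_id' s).mul (hasDerivAt_cosh s)).div (hasDerivAt_sinh s)
        hsinh).sub_const 1)).congr_deriv ?_
    simp only [Pi.mul_apply]
    field_simp
    linear_combination s ^ 2 * cosh_sq s
  · exact div_nonneg (by linarith [two_sinh_sq_le hs.le]) (by positivity)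

theorem antitoneOn_log_sinh_div_self_div_sq :
    AntitoneOn (fun t => log (sinh t / t) / t ^ 2) (Ioi 0) := by
  have hderiv : ∀ t ∈ Ioi (0 : ℝ), HasDerivAt (fun t => log (sinh t / t) / t ^ 2)
      ((t * cosh t / sinh t - 1 - 2 * log (sinh t / t)) / t ^ 3) t := by
    intro t (ht : 0 < t)
    have hsinh : sinh t ≠ 0 := sinh_ne_zero.2 ht.ne'
    refine ((hasDerivAt_log_sinh_div_self (ne_of_gt ht)).div (hasDerivAt_pow 2 t)
      (by positivity)).congr_deriv ?_
    field_simp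
    ring
  refine antitoneOn_of_hasDerivWithinAt_nonpos (convex_Ioi 0)
    (fun t ht => (hderiv t ht).continuousAt.continuousWithinAt)
    (fun t ht => (hderiv t (interior_subset ht)).hasDerivWithinAt) (fun t ht => ?_)
  rw [interior_Ioi, mem_Ioi] at ht
  exact div_nonpos_of_nonpos_of_nonneg
    (by linarith [mul_coth_sub_one_le_two_log_sinh_div_self ht]) (by positivity)

theorem sq_mul_log_sinh_div_self_le {p u : ℝ} (hp0 : 0 < p) (hp1 : p ≤ 1) (hu : 0 < u) :
    p ^ 2 * log (sinh u / u) ≤ log (sinh (p * u) / (p * u)) := by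
  have hpu : 0 < p * u := mul_pos hp0 hu
  have h : log (sinh u / u) / u ^ 2 ≤ log (sinh (p * u) / (p * u)) / (p * u) ^ 2 :=
    antitoneOn_log_sinh_div_self_div_sq hpu hu (mul_le_of_le_one_left hu.le hp1)
  rw [div_le_div_iff₀ (by positivity) (by positivity)] at h
  exact le_of_mul_le_mul_right (by linarith) (by positivity : 0 < u ^ 2)

theorem mul_one_sub_mul_sinh_le {p u : ℝ} (hp0 : 0 < p) (hp1 : p < 1) (hu : 0 < u) :
    p * (1 - p) * (u * sinh u) ≤
      cosh u ^ (2 * (p * (1 - p))) * (sinh (p * u) * sinh ((1 - p) * u)) := by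
  have hq0 : 0 < 1 - p := by linarith
  have hsp := sinh_pos_iff.2 (mul_pos hp0 hu)
  have hsq := sinh_pos_iff.2 (mul_pos hq0 hu)
  have hs := sinh_pos_iff.2 hu
  have hlog_cosh : log (sinh u / u) ≤ log (cosh u) :=
    log_le_log (by positivity) ((div_le_iff₀ hu).2 (by linarith [sinh_le_mul_cosh hu.le]))
  have hlog : log (sinh u / u) ≤
      log (cosh u ^ (2 * (p * (1 - p))) * (sinh (p * u) / (p * u)) *
        (sinh ((1 - p) * u) / ((1 - p) * u))) := by
    rw [log_mul (by positivity) (by positivity), log_mul (by positivity) (by positivity),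
      log_rpow (cosh_pos u)]
    linear_combination sq_mul_log_sinh_div_self_le hp0 hp1.le hu +
      sq_mul_log_sinh_div_self_le hq0 (by linarith) hu + 2 * (p * (1 - p)) * hlog_cosh
  have h := (log_le_log_iff (by positivity) (by positivity)).1 hlog
  rw [show cosh u ^ (2 * (p * (1 - p))) * (sinh (p * u) / (p * u)) *
      (sinh ((1 - p) * u) / ((1 - p) * u)) = cosh u ^ (2 * (p * (1 - p))) *
        (sinh (p * u) * sinh ((1 - p) * u)) / (p * (1 - p) * u ^ 2) by field_simp,
    le_div_iff₀ (by positivity)] at h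
  calc p * (1 - p) * (u * sinh u) = sinh u / u * (p * (1 - p) * u ^ 2) := by field_simp
    _ ≤ _ := h

theorem exp_add_sub_exp_sub (m u : ℝ) : exp (m + u) - exp (m - u) = 2 * exp m * sinh u := by
  rw [sinh_eq, sub_eq_add_neg, sub_eq_add_neg, exp_add, exp_add]
  ring

theorem kantorovich_exp_two_mul (u : ℝ) :
    (exp (2 * u) + 1) ^ 2 / (4 * exp (2 * u)) = cosh u ^ 2 := by
  rw [cosh_eq, two_mul, exp_add, exp_neg]
  field_simp
  ring

theorem wyd_exp_coords_le_kantorovich_log_mean {p : ℝ} (hp0 : 0 < p) (hp1 : p < 1) (m : ℝ)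
    {u : ℝ} (hu : 0 < u) :
    p * (1 - p) * (2 * exp m * sinh u) ^ 2 /
        (2 * exp (m * p) * sinh (p * u) * (2 * exp (m * (1 - p)) * sinh ((1 - p) * u))) ≤
      cosh u ^ (2 * (p * (1 - p))) * (2 * exp m * sinh u / (2 * u)) := by
  have hsp := sinh_pos_iff.2 (mul_pos hp0 hu)
  have hsq := sinh_pos_iff.2 (mul_pos (sub_pos.2 hp1) hu)
  have hs := sinh_pos_iff.2 hu
  have hexp : exp (m * p) * exp (m * (1 - p)) = exp m := by rw [← exp_add]; ring_nf
  rw [div_le_iff₀ (by positivity)]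
  calc p * (1 - p) * (2 * exp m * sinh u) ^ 2
      = 4 * exp m ^ 2 * (sinh u / u) * (p * (1 - p) * (u * sinh u)) := by field_simp; ring
    _ ≤ 4 * exp m ^ 2 * (sinh u / u) *
        (cosh u ^ (2 * (p * (1 - p))) * (sinh (p * u) * sinh ((1 - p) * u))) :=
      mul_le_mul_of_nonneg_left (mul_one_sub_mul_sinh_le hp0 hp1 hu) (by positivity)
    _ = _ := by
      rw [← hexp]
      field_simp
      ring

theorem wyd_two_var_le_kantorovich_log_mean (x y p : ℝ) (hx : 0 < x) (hy : 0 < y)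
    (hxy : x ≠ y) (hp0 : 0 < p) (hp1 : p < 1) :
    p * (1 - p) * (x - y) ^ 2 / ((x ^ p - y ^ p) * (x ^ (1 - p) - y ^ (1 - p))) ≤
      ((x / y + 1) ^ 2 / (4 * (x / y))) ^ (p * (1 - p)) *
        ((x - y) / (Real.log x - Real.log y)) := by
  obtain ⟨m, u, rfl, rfl⟩ : ∃ m u, x = exp (m + u) ∧ y = exp (m - u) :=
    ⟨(log x + log y) / 2, (log x - log y) / 2, by ring_nf; rw [exp_log hx],
      by ring_nf; rw [exp_log hy]⟩
  have hu : u ≠ 0 := by rintro rfl; simp at hxy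
  have hK : exp (m + u) / exp (m - u) = exp (2 * u) := by rw [← exp_sub]; ring_nf
  have hcosh : (cosh u ^ 2) ^ (p * (1 - p)) = cosh u ^ (2 * (p * (1 - p))) := by
    rw [← rpow_natCast, ← rpow_mul (cosh_pos u).le]; norm_num
  simp only [← exp_mul, log_exp, add_mul, sub_mul, exp_add_sub_exp_sub, hK,
    kantorovich_exp_two_mul, hcosh]
  rw [mul_comm u p, mul_comm u (1 - p), show m + u - (m - u) = 2 * u by ring]
  clear hx hy hxy hK hcosh
  -- both sides are even in `u`
  wlog hu_pos : 0 < u generalizing u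
  · have := this (-u) (neg_ne_zero.2 hu) (by linarith [hu.lt_or_gt.resolve_right hu_pos])
    simpa only [mul_neg, neg_mul, neg_neg, sinh_neg, cosh_neg, neg_sq, neg_div_neg_eq]
      using this
  exact wyd_exp_coords_le_kantorovich_log_mean hp0 hp1 m hu_pos
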